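/- Let (α, β) be a Bailey pair relative to a = q^ℓ with ℓ a non-negative integer; i.e. β_L = Σ_{r=0}^{L} α_r / ((q)_{L-r} (q^{ℓ+1};q)_{L+r}) for all L ≥ 0. Define sequences α̃, β̃ in F by: α̃_m = 0 for 0 ≤ m ≤ ℓ-1, α̃_{2L+ℓ} = α_L and α̃_{2L+ℓ+1} = 0 for L ≥ 0; and β̃_m = 0 for 0 ≤ m ≤ ℓ-1, β̃_{L+ℓ} = Σ_{s=0, s ≡ L (mod 2)}^{L} q^{s(s-1)/2} / ((q)_ℓ (q)_s) · β_{(L-s)/2} for L ≥ 0. Then (α̃, β̃) forms a trinomial Bailey pair relative to 1, i.e. β̃_L = Σ_{r=0}^{L} Q_1(L, r, q) · α̃_r for every integer L ≥ 0. -/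
import Mathlib


open Finset

noncomputable section

/-- The field `F = RatFunc ℚ` of rational functions over `ℚ` in the variable `t`,
where `t` plays the role of `q^(1/2)`. -/
abbrev F : Type := RatFunc ℚ

/-- The variable `t = q^(1/2)`. -/
def t : F := RatFunc.X

/-- `q = t^2`. -/
def q : F := t ^ 2

/-- The Pochhammer symbol `(a; b)_n = ∏_{k=0}^{n-1} (1 - a bᵏ)`, set equal to `0` for
negative `n` (so that any term containing a factor `1/(a;b)_n` with `n < 0` vanishes). -/
def poch (b a : F) (n : ℤ) : F :=
  if n < 0 then 0 else ∏ k ∈ Finset.range n.toNat, (1 - a * b ^ k)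

/-- The `q`-trinomial coefficient `((L; B; qq))_{A,2}` with base `qq`:
`∑_j qq^(j(j+B)) (qq)_L / ((qq)_j (qq)_{j+A} (qq)_{L-2j-A})`; the sum is finite since
terms with a negative Pochhammer index in the denominator vanish. -/
def trinom (qq : F) (L : ℕ) (B A : ℤ) : F :=
  ∑ j ∈ Finset.range (L + 1),
    qq ^ ((j : ℤ) * ((j : ℤ) + B)) * poch qq qq (L : ℤ) /
      (poch qq qq (j : ℤ) * poch qq qq ((j : ℤ) + A) *
        poch qq qq ((L : ℤ) - 2 * (j : ℤ) - A))

/-- `T_n(L, A, q) = q^((L(L-n) - A(A-n))/2) ((L; A-n; q⁻¹))_{A,2}`; note `t ^ m = q ^ (m/2)`. -/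
def T (n : ℤ) (L : ℕ) (A : ℤ) : F :=
  t ^ ((L : ℤ) * ((L : ℤ) - n) - A * (A - n)) * trinom q⁻¹ L (A - n) A

/-- `Q_n(L, A, q) = T_n(L, A, q) / (q)_L`. -/
def Q (n : ℤ) (L : ℕ) (A : ℤ) : F := T n L A / poch q q (L : ℤ)

/-! ### Auxiliary lemmas -/

lemma ht : t ≠ 0 := RatFunc.X_ne_zero
lemma hq : q ≠ 0 := pow_ne_zero _ ht

lemma tpow_ne_one (n : ℕ) (hn : n ≠ 0) : t ^ n ≠ 1 := by
  intro h
  have h2 : (algebraMap (Polynomial ℚ) (RatFunc ℚ)) (Polynomial.X ^ n) =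
      (algebraMap (Polynomial ℚ) (RatFunc ℚ)) 1 := by
    rw [map_pow, RatFunc.algebraMap_X, map_one]; exact h
  have h3 : (Polynomial.X : Polynomial ℚ) ^ n = 1 := RatFunc.algebraMap_injective ℚ h2
  have := congrArg Polynomial.natDegree h3
  simp [Polynomial.natDegree_X_pow] at this
  exact hn this

lemma qpow_ne_one (n : ℕ) (hn : n ≠ 0) : q ^ n ≠ 1 := by
  have : q ^ n = t ^ (2 * n) := by rw [q, ← pow_mul]
  rw [this]; exact tpow_ne_one _ (by omega)

lemma poch_nat (b a : F) (n : ℕ) : poch b a (n : ℤ) = ∏ k ∈ Finset.range n, (1 - a * b ^ k) := by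
  simp [poch]

lemma poch_neg (b a : F) (n : ℤ) (h : n < 0) : poch b a n = 0 := by simp [poch, h]

lemma poch_q_ne_zero (n : ℕ) : poch q q (n : ℤ) ≠ 0 := by
  rw [poch_nat]
  apply Finset.prod_ne_zero_iff.mpr
  intro k _
  have : q * q ^ k = q ^ (k + 1) := by ring
  rw [this]
  intro h
  exact qpow_ne_one (k+1) (by omega) (by linear_combination -h)

lemma poch_qinv_ne_zero (n : ℕ) : poch q⁻¹ q⁻¹ (n : ℤ) ≠ 0 := by
  rw [poch_nat]
  apply Finset.prod_ne_zero_iff.mpr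
  intro k _
  have : q⁻¹ * q⁻¹ ^ k = (q ^ (k+1))⁻¹ := by rw [← inv_pow]; ring
  rw [this]
  intro h
  have : (q ^ (k+1))⁻¹ = 1 := by linear_combination -h
  exact qpow_ne_one (k+1) (by omega) (by
    have := congrArg (·⁻¹) this
    simpa using this)

/-- `(q⁻¹;q⁻¹)_n = (-1)^n t^(-n(n+1)) (q;q)_n`. -/
lemma poch_inv_eq (n : ℕ) :
    poch q⁻¹ q⁻¹ (n : ℤ) = (-1) ^ n * t ^ (-(n * (n + 1)) : ℤ) * poch q q (n : ℤ) := by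
  induction n with
  | zero => simp [poch]
  | succ n ih =>
    rw [poch_nat, Finset.prod_range_succ, ← poch_nat, ih, poch_nat (n := n+1),
      Finset.prod_range_succ, ← poch_nat]
    have hX : q * q ^ n = t ^ ((2*(n:ℤ)+2)) := by
      have h0 : q * q ^ n = t ^ (2+2*n : ℕ) := by rw [q, ← pow_mul, ← pow_add]
      rw [h0, ← zpow_natCast]; congr 1; push_cast; ring
    have hXinv : q⁻¹ * q⁻¹ ^ n = t ^ (-(2*(n:ℤ)+2)) := by
      rw [inv_pow, ← mul_inv, hX, ← zpow_neg]
    have hXX : t ^ (-(2*(n:ℤ)+2)) * t ^ ((2*(n:ℤ)+2)) = 1 := by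
      rw [← zpow_add₀ ht]
      have h0 : (-(2*(n:ℤ)+2)) + (2*(n:ℤ)+2) = 0 := by ring
      rw [h0, zpow_zero]
    have key : (1 : F) - q⁻¹ * q⁻¹ ^ n = -t ^ (-(2*(n:ℤ)+2)) * (1 - q * q ^ n) := by
      rw [hXinv, hX]; linear_combination -hXX
    rw [key]
    have hexp : (-(↑(n+1) * (↑(n+1) + 1)) : ℤ) = (-(n*(n+1)) : ℤ) + (-(2*(n:ℤ)+2)) := by
      push_cast; ring
    rw [hexp, zpow_add₀ ht]
    ring

lemma hqinv : q⁻¹ = t ^ (-2 : ℤ) := by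
  rw [q, ← zpow_natCast, ← zpow_neg]; norm_num

set_option maxHeartbeats 1000000 in
/-- Termwise inversion of the base from `q⁻¹` to `q` in the trinomial sum. -/
lemma term_eq (j A m' : ℕ) (L : ℕ) (hm : (L:ℤ) - 2*j - A = m') :
    t ^ ((L:ℤ)*((L:ℤ)-1) - (A:ℤ)*((A:ℤ)-1)) *
      (q⁻¹ ^ ((j:ℤ)*((j:ℤ)+((A:ℤ)-1))) * poch q⁻¹ q⁻¹ (L:ℤ) /
        (poch q⁻¹ q⁻¹ (j:ℤ) * poch q⁻¹ q⁻¹ ((j:ℤ)+A) * poch q⁻¹ q⁻¹ ((L:ℤ)-2*j-A))) /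
      poch q q (L:ℤ)
    = t ^ (((L:ℤ)-2*j-A) * (((L:ℤ)-2*j-A) - 1)) /
        (poch q q (j:ℤ) * poch q q ((j:ℤ)+A) * poch q q ((L:ℤ)-2*j-A)) := by
  have hL : L = 2*j + A + m' := by omega
  subst hL
  have hcast1 : ((2*j+A+m' : ℕ):ℤ) - 2*j - A = ((m':ℕ):ℤ) := by push_cast; ring
  have hcast2 : ((j:ℤ)+A) = ((j+A : ℕ):ℤ) := by push_cast; ring
  rw [hcast1, hcast2, poch_inv_eq, poch_inv_eq, poch_inv_eq, poch_inv_eq,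
    hqinv, ← zpow_mul]
  have h1 := poch_q_ne_zero j
  have h2 := poch_q_ne_zero (j+A)
  have h3 := poch_q_ne_zero m'
  have h4 := poch_q_ne_zero (2*j+A+m')
  have h5 : (t:F) ≠ 0 := ht
  have hs : ((-1:F)) ^ (2*j+A+m') = (-1)^j * (-1)^(j+A) * (-1)^(m') := by
    rw [← pow_add, ← pow_add]; congr 1; ring
  rw [hs, ← mul_div_assoc, div_div]
  rw [div_eq_div_iff]
  · have htpow : t ^ ((↑(2*j+A+m') : ℤ) * (↑(2*j+A+m') - 1) - (A:ℤ)*((A:ℤ)-1)) *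
        t ^ (-2 * ((j:ℤ) * ((j:ℤ) + ((A:ℤ) - 1)))) *
        t ^ (-((↑(2*j+A+m') : ℤ) * (↑(2*j+A+m') + 1))) =
        t ^ ((m':ℤ) * ((m':ℤ) - 1)) * t ^ (-((j:ℤ)*((j:ℤ)+1))) *
        t ^ (-((↑(j+A) : ℤ)*(↑(j+A)+1))) * t ^ (-((m':ℤ)*((m':ℤ)+1))) := by
      rw [← zpow_add₀ h5, ← zpow_add₀ h5, ← zpow_add₀ h5, ← zpow_add₀ h5, ← zpow_add₀ h5]
      congr 1
      push_cast
      ring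
    linear_combination ((-1:F))^j * (-1)^(j+A) * (-1)^(m') * poch q q (j:ℤ) *
      poch q q ((j+A:ℕ):ℤ) * poch q q ((m':ℕ):ℤ) * poch q q ((2*j+A+m':ℕ):ℤ) * htpow
  · apply_rules [mul_ne_zero, zpow_ne_zero, pow_ne_zero, neg_ne_zero.mpr, one_ne_zero]
  · apply_rules [mul_ne_zero, zpow_ne_zero, pow_ne_zero, neg_ne_zero.mpr, one_ne_zero]

/-- `Q 1 L A` written as a single sum in the base `q`. -/
lemma Q_eq_sum (L A : ℕ) :
    Q 1 L (A:ℤ) = ∑ j ∈ Finset.range (L+1),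
      t ^ (((L:ℤ) - 2*(j:ℤ) - (A:ℤ)) * (((L:ℤ) - 2*(j:ℤ) - (A:ℤ)) - 1)) /
        (poch q q (j:ℤ) * poch q q ((j:ℤ) + (A:ℤ)) *
          poch q q ((L:ℤ) - 2*(j:ℤ) - (A:ℤ))) := by
  rw [Q, T, trinom, Finset.mul_sum, Finset.sum_div]
  refine Finset.sum_congr rfl fun j hj => ?_
  by_cases hm : (L:ℤ) - 2*(j:ℤ) - (A:ℤ) < 0
  · rw [poch_neg q⁻¹ q⁻¹ _ hm, poch_neg q q _ hm]
    simp
  · push_neg at hm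
    have := term_eq j A ((L:ℤ) - 2*(j:ℤ) - (A:ℤ)).toNat L (Int.toNat_of_nonneg hm).symm
    convert this using 3

lemma Q_zero_of_gt (L A : ℕ) (h : L < A) : Q 1 L (A:ℤ) = 0 := by
  rw [Q_eq_sum]
  refine Finset.sum_eq_zero fun j hj => ?_
  rw [poch_neg q q ((L:ℤ) - 2*(j:ℤ) - (A:ℤ)) (by omega)]
  simp

/-- Splitting lemma `(q)_{ℓ+n} = (q)_ℓ (q^{ℓ+1};q)_n`. -/
lemma poch_split (ℓ n : ℕ) :
    poch q q ((ℓ+n : ℕ) : ℤ) = poch q q (ℓ:ℤ) * poch q (q^(ℓ+1)) ((n : ℕ):ℤ) := by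
  induction n with
  | zero => simp [poch]
  | succ n ih =>
    have e1 : (ℓ + (n+1) : ℕ) = (ℓ + n) + 1 := by omega
    rw [e1, poch_nat q q ((ℓ+n)+1), Finset.prod_range_succ, ← poch_nat, ih,
      poch_nat q (q^(ℓ+1)) (n+1), Finset.prod_range_succ, ← poch_nat]
    have e2 : q * q ^ (ℓ + n) = q^(ℓ+1) * q^n := by rw [← pow_succ', ← pow_add]; ring_nf
    rw [e2]
    ring

set_option maxHeartbeats 1000000 in
/-- The key coefficient identity. -/
lemma key (ℓ N M : ℕ) :
    ∑ s ∈ Finset.range (N+1), (if s % 2 = N % 2 then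
      t ^ ((s:ℤ)*((s:ℤ)-1)) / (poch q q (ℓ:ℤ) * poch q q (s:ℤ)) *
        (1 / (poch q q ((((N-s)/2 : ℕ):ℤ) - (M:ℤ)) *
          poch q (q^(ℓ+1)) ((((N-s)/2 : ℕ):ℤ) + (M:ℤ))))
      else 0)
    = Q 1 (N+ℓ) ((2*M+ℓ : ℕ):ℤ) := by
  rw [Q_eq_sum (N+ℓ) (2*M+ℓ)]
  -- restrict the right-hand side to its support
  rw [← Finset.sum_filter_of_ne (s := Finset.range (N+ℓ+1))
      (p := fun j => 2*j + 2*M ≤ N) (fun j hj hne => by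
        by_contra hc
        apply hne
        rw [poch_neg q q ((↑(N+ℓ) : ℤ) - 2*(j:ℤ) - (↑(2*M+ℓ):ℤ)) (by push_cast; omega)]
        simp)]
  -- restrict the left-hand side to its support
  rw [← Finset.sum_filter_of_ne (s := Finset.range (N+1))
      (p := fun s => s % 2 = N % 2 ∧ M ≤ (N-s)/2) (fun s hs hne => by
        by_contra hc
        apply hne
        by_cases hpar : s % 2 = N % 2
        · rw [if_pos hpar]
          rw [poch_neg q q ((((N-s)/2 : ℕ):ℤ) - (M:ℤ)) (by
            have : ¬ (M ≤ (N-s)/2) := fun h => hc ⟨hpar, h⟩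
            omega)]
          simp
        · rw [if_neg hpar])]
  refine Finset.sum_nbij' (fun s => (N-s)/2 - M) (fun j => N - 2*j - 2*M) ?_ ?_ ?_ ?_ ?_
  · intro s hs
    simp only [Finset.mem_filter, Finset.mem_range] at hs ⊢
    omega
  · intro j hj
    simp only [Finset.mem_filter, Finset.mem_range] at hj ⊢
    omega
  · intro s hs
    simp only [Finset.mem_filter, Finset.mem_range] at hs
    omega
  · intro j hj
    simp only [Finset.mem_filter, Finset.mem_range] at hj
    omega
  · intro s hs
    simp only [Finset.mem_filter, Finset.mem_range] at hs
    obtain ⟨hsN, hpar, hM⟩ := hs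
    rw [if_pos hpar]
    have e1 : (((N-s)/2 : ℕ):ℤ) - (M:ℤ) = (((N-s)/2 - M : ℕ):ℤ) := by omega
    have e2 : (((N-s)/2 : ℕ):ℤ) + (M:ℤ) = (((N-s)/2 + M : ℕ):ℤ) := by omega
    have e3 : (((N-s)/2 - M : ℕ):ℤ) + (↑(2*M+ℓ):ℤ) = ((ℓ + ((N-s)/2 + M) : ℕ):ℤ) := by omega
    have e4 : ((N+ℓ:ℕ):ℤ) - 2*(((N-s)/2 - M : ℕ):ℤ) - (↑(2*M+ℓ):ℤ) = (s:ℤ) := by omega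
    rw [e1, e2, e3, e4, poch_split ℓ ((N-s)/2 + M)]
    ring

/-- Corollary 3 of Warnaar's note, case `n = 1`: a Bailey pair relative to `a = q^ℓ`
yields a trinomial Bailey pair relative to `1`. -/
theorem binomial_gives_trinomial_BP_n_one (ℓ : ℕ) (α β αt βt : ℕ → F)
    (hBP : ∀ L : ℕ, β L = ∑ r ∈ Finset.range (L + 1),
      α r / (poch q q ((L : ℤ) - (r : ℤ)) * poch q (q ^ (ℓ + 1)) ((L : ℤ) + (r : ℤ))))
    (hαlow : ∀ m : ℕ, m < ℓ → αt m = 0)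
    (hαeven : ∀ L : ℕ, αt (2 * L + ℓ) = α L)
    (hαodd : ∀ L : ℕ, αt (2 * L + ℓ + 1) = 0)
    (hβlow : ∀ m : ℕ, m < ℓ → βt m = 0)
    (hβ : ∀ L : ℕ, βt (L + ℓ) = ∑ s ∈ Finset.range (L + 1),
      if s % 2 = L % 2 then
        t ^ ((s : ℤ) * ((s : ℤ) - 1)) / (poch q q (ℓ : ℤ) * poch q q (s : ℤ)) *
          β ((L - s) / 2)
      else 0) :
    ∀ L : ℕ, βt L = ∑ r ∈ Finset.range (L + 1), Q 1 L (r : ℤ) * αt r := by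
  intro L
  rcases lt_or_ge L ℓ with h | h
  · rw [hβlow L h]
    symm
    refine Finset.sum_eq_zero fun r hr => ?_
    rw [hαlow r (by simp only [Finset.mem_range] at hr; omega), mul_zero]
  · obtain ⟨N, rfl⟩ : ∃ N, L = N + ℓ := ⟨L - ℓ, by omega⟩
    rw [hβ N]
    -- Step 1: expand β and extend the inner sum to range (N+1)
    have step1 : ∀ s ∈ Finset.range (N+1),
        (if s % 2 = N % 2 then
          t ^ ((s : ℤ) * ((s : ℤ) - 1)) / (poch q q (ℓ : ℤ) * poch q q (s : ℤ)) *
            β ((N - s) / 2)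
        else 0)
        = ∑ r ∈ Finset.range (N+1), (if s % 2 = N % 2 then
            α r * (t ^ ((s : ℤ) * ((s : ℤ) - 1)) / (poch q q (ℓ : ℤ) * poch q q (s : ℤ)) *
              (1 / (poch q q ((((N-s)/2 : ℕ) : ℤ) - (r : ℤ)) *
                poch q (q ^ (ℓ + 1)) ((((N-s)/2 : ℕ) : ℤ) + (r : ℤ)))))
          else 0) := by
      intro s hs
      simp only [Finset.mem_range] at hs
      by_cases hpar : s % 2 = N % 2
      · simp only [if_pos hpar]
        rw [hBP ((N-s)/2)]
        rw [Finset.sum_subset (Finset.range_subset_range.mpr (by omega : (N-s)/2 + 1 ≤ N+1))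
          (fun r hr hr' => by
            simp only [Finset.mem_range] at hr hr'
            rw [poch_neg q q ((((N-s)/2 : ℕ) : ℤ) - (r : ℤ)) (by omega)]
            simp)]
        rw [Finset.mul_sum]
        refine Finset.sum_congr rfl fun r hr => ?_
        rw [div_eq_mul_one_div (α r)]
        ring
      · simp only [if_neg hpar, Finset.sum_const_zero]
    rw [Finset.sum_congr rfl step1, Finset.sum_comm]
    -- Step 2: pull out α r and apply the key identity
    have step2 : ∀ r ∈ Finset.range (N+1),
        (∑ s ∈ Finset.range (N+1), (if s % 2 = N % 2 then
            α r * (t ^ ((s : ℤ) * ((s : ℤ) - 1)) / (poch q q (ℓ : ℤ) * poch q q (s : ℤ)) *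
              (1 / (poch q q ((((N-s)/2 : ℕ) : ℤ) - (r : ℤ)) *
                poch q (q ^ (ℓ + 1)) ((((N-s)/2 : ℕ) : ℤ) + (r : ℤ)))))
          else 0))
        = α r * Q 1 (N+ℓ) ((2*r+ℓ : ℕ) : ℤ) := by
      intro r hr
      rw [← key ℓ N r, Finset.mul_sum]
      refine Finset.sum_congr rfl fun s hs => ?_
      by_cases hpar : s % 2 = N % 2
      · simp only [if_pos hpar]
      · simp only [if_neg hpar, mul_zero]
    rw [Finset.sum_congr rfl step2]
    -- Step 3: transform the target sum over r into the same form
    symm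
    have himg : ∑ u ∈ (Finset.range (N/2+1)).image (fun r => 2*r+ℓ),
        Q 1 (N+ℓ) (u : ℤ) * αt u
        = ∑ r ∈ Finset.range (N/2+1), Q 1 (N+ℓ) ((2*r+ℓ : ℕ) : ℤ) * αt (2*r+ℓ) :=
      Finset.sum_image (fun x _ y _ hxy => by omega)
    calc ∑ u ∈ Finset.range (N + ℓ + 1), Q 1 (N+ℓ) (u : ℤ) * αt u
        = ∑ u ∈ (Finset.range (N/2+1)).image (fun r => 2*r+ℓ),
            Q 1 (N+ℓ) (u : ℤ) * αt u := by
          refine (Finset.sum_subset (Finset.image_subset_iff.mpr (fun r hr => by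
              simp only [Finset.mem_range] at hr ⊢; omega))
            (fun u hu hu' => ?_)).symm
          simp only [Finset.mem_range] at hu
          simp only [Finset.mem_image, Finset.mem_range] at hu'
          rcases lt_or_ge u ℓ with h1 | h1
          · rw [hαlow u h1, mul_zero]
          · rcases Nat.even_or_odd (u - ℓ) with ⟨c, hc⟩ | ⟨c, hc⟩
            · exact absurd ⟨c, by omega, by omega⟩ hu'
            · have hu2 : u = 2*c + ℓ + 1 := by omega
              rw [hu2, hαodd c, mul_zero]
      _ = ∑ r ∈ Finset.range (N/2+1), Q 1 (N+ℓ) ((2*r+ℓ : ℕ) : ℤ) * αt (2*r+ℓ) := himg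
      _ = ∑ r ∈ Finset.range (N/2+1), Q 1 (N+ℓ) ((2*r+ℓ : ℕ) : ℤ) * α r := by
          refine Finset.sum_congr rfl fun r hr => ?_
          rw [hαeven r]
      _ = ∑ r ∈ Finset.range (N+1), Q 1 (N+ℓ) ((2*r+ℓ : ℕ) : ℤ) * α r := by
          refine Finset.sum_subset (Finset.range_subset_range.mpr (by omega)) fun r hr hr' => ?_
          simp only [Finset.mem_range] at hr hr'
          rw [Q_zero_of_gt (N+ℓ) (2*r+ℓ) (by omega), zero_mul]
      _ = ∑ r ∈ Finset.range (N+1), α r * Q 1 (N+ℓ) ((2*r+ℓ : ℕ) : ℤ) := by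
          refine Finset.sum_congr rfl fun r hr => ?_
          ring

end
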